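/- arXiv:2605.20750 — 4 statements merged into one kernel-verified Lean document; each statement's English description precedes it below -/
import Mathlib

section
/- Let K and K' be nonempty compact convex sets and let Φ : A_c(K) → A_c(K') be a gauge-preserving bijection with Φ(1_K) = 1_{K'}. Then there exists a bijection α : ∂_e K → ∂_e K' such that for every f ∈ A_c(K) and every ψ' ∈ ∂_e K' one has Φ(f)(ψ') = f(α^{-1}(ψ')), and for every g ∈ A_c(K') and every ψ ∈ ∂_e K one has Φ^{-1}(g)(ψ) = g(α(ψ)). -/
open Set

noncomputable section

/-- `f : K → ℝ` is affine on `K`. -/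
def IsAffineOn {E : Type*} [AddCommGroup E] [Module ℝ E] (K : Set E) (f : K → ℝ) : Prop :=
  ∀ (x y : K) (t : ℝ), 0 ≤ t → t ≤ 1 →
    ∀ h : t • (x : E) + (1 - t) • (y : E) ∈ K,
      f ⟨t • (x : E) + (1 - t) • (y : E), h⟩ = t * f x + (1 - t) * f y

/-- Membership in `A_c(K)`: continuous, affine and strictly positive functions on `K`. -/
def MemAc {E : Type*} [AddCommGroup E] [Module ℝ E] [TopologicalSpace E]
    (K : Set E) (f : K → ℝ) : Prop :=
  Continuous f ∧ IsAffineOn K f ∧ ∀ x : K, 0 < f x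

/-- The gauge `m(f,g) = sup {λ > 0 : λ·g ≤ f}`. -/
def gaugem {E : Type*} [AddCommGroup E] [Module ℝ E] {K : Set E} (f g : K → ℝ) : ℝ :=
  sSup {l : ℝ | 0 < l ∧ ∀ x : K, l * g x ≤ f x}

/-!
Gauge preservation says precisely that `Φ` and `Φ⁻¹` transport the inequalities `l • g ≤ f`;
in particular `Φ` is an order isomorphism fixing the constants.

At an extreme point `ψ'` of `K'`, finitely many elements of `A_c(K')` have a common majorant in
`A_c(K')` exceeding their maximum at `ψ'` by as little as we like (Hahn–Banach in `E' × ℝ`,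
separating a point above `ψ'` from the convex join of the graphs). Pulling such majorants back
through `Φ⁻¹` and applying Krein–Milman, finitely many `f` nearly satisfy `f x ≤ Φ f ψ'` at a
common extreme point `x` of `K`; compactness of the closure of `∂_e K` then yields a point `β`
there with `f β ≤ Φ f ψ'` for all `f`. The same argument for `Φ⁻¹` at `β` returns a point that
`A_c(K')` cannot distinguish from `ψ'`, so `f β = Φ f ψ'`. Finally `β` is extreme: at a
non-extreme point two functions equal to `1` have no common affine majorant close to `1`,
whereas at `ψ'` their images do.
-/

section Affine

variable {E : Type*} [AddCommGroup E] [Module ℝ E] {K : Set E}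

theorem IsAffineOn.apply_combo {f : K → ℝ} (hf : IsAffineOn K f) (x y : K) {a b : ℝ}
    (ha : 0 ≤ a) (hb : 0 ≤ b) (hab : a + b = 1) (h : a • (x : E) + b • (y : E) ∈ K) :
    f ⟨a • (x : E) + b • (y : E), h⟩ = a * f x + b * f y := by
  obtain rfl : b = 1 - a := by linarith
  exact hf x y a ha (by linarith) h

theorem IsAffineOn.convex_graph (hK : Convex ℝ K) {f : K → ℝ} (hf : IsAffineOn K f) :
    Convex ℝ (range fun x : K => ((x : E), f x)) := by
  rintro _ ⟨x, rfl⟩ _ ⟨y, rfl⟩ a b ha hb hab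
  refine ⟨⟨a • (x : E) + b • (y : E), hK x.2 y.2 ha hb hab⟩, ?_⟩
  simp only [Prod.smul_mk, Prod.mk_add_mk, smul_eq_mul, hf.apply_combo x y ha hb hab]

theorem eq_of_combo_eq_mem_extremePoints {ψ x y : E} (hψ : ψ ∈ K.extremePoints ℝ) (hx : x ∈ K)
    (hy : y ∈ K) {a b : ℝ} (ha : 0 ≤ a) (hb : 0 ≤ b) (hab : a + b = 1)
    (h : a • x + b • y = ψ) : (a = 0 ∨ x = ψ) ∧ (b = 0 ∨ y = ψ) := by
  rcases ha.eq_or_lt with rfl | ha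
  · obtain rfl : b = 1 := by linarith
    simp_all
  rcases hb.eq_or_lt with rfl | hb
  · obtain rfl : a = 1 := by linarith
    simp_all
  obtain ⟨hxψ, hyψ⟩ := (mem_extremePoints.1 hψ).2 x hx y hy ⟨a, b, ha, hb, hab, h⟩
  exact ⟨.inr hxψ, .inr hyψ⟩

theorem not_mem_convexJoin_graphs_of_mem_extremePoints {ψ : K} (hψ : (ψ : E) ∈ K.extremePoints ℝ)
    (g₁ g₂ : K → ℝ) {r : ℝ} (hr : max (g₁ ψ) (g₂ ψ) < r) :
    ((ψ : E), r) ∉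
      convexJoin ℝ (range fun x : K => ((x : E), g₁ x)) (range fun x : K => ((x : E), g₂ x)) := by
  intro hP
  obtain ⟨_, ⟨x, rfl⟩, _, ⟨y, rfl⟩, a, b, ha, hb, hab, hP⟩ := mem_convexJoin.1 hP
  simp only [Prod.smul_mk, Prod.mk_add_mk, smul_eq_mul, Prod.mk.injEq] at hP
  obtain ⟨hx, hy⟩ := eq_of_combo_eq_mem_extremePoints hψ x.2 y.2 ha hb hab hP.1
  have h₁ : a * g₁ x = a * g₁ ψ := by
    rcases hx with rfl | hx
    · simp
    · rw [Subtype.ext hx]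
  have h₂ : b * g₂ y = b * g₂ ψ := by
    rcases hy with rfl | hy
    · simp
    · rw [Subtype.ext hy]
  have hr' : r = a * r + b * r := by rw [← add_mul, hab, one_mul]
  nlinarith [mul_le_mul_of_nonneg_left (le_max_left (g₁ ψ) (g₂ ψ)) ha,
    mul_le_mul_of_nonneg_left (le_max_right (g₁ ψ) (g₂ ψ)) hb]

end Affine

section Basic

variable {E : Type*} [AddCommGroup E] [Module ℝ E] [TopologicalSpace E] {K : Set E}

abbrev Ac (K : Set E) : Type _ := {f : K → ℝ // MemAc K f}

structure IsNonemptyCompactConvex (K : Set E) : Prop where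
  nonempty : K.Nonempty
  isCompact : IsCompact K
  convex : Convex ℝ K

theorem memAc_const {c : ℝ} (hc : 0 < c) : MemAc K fun _ => c :=
  ⟨continuous_const, fun _ _ _ _ _ _ => by ring, fun _ => hc⟩

instance : One (Ac K) := ⟨⟨fun _ => 1, memAc_const one_pos⟩⟩

theorem MemAc.const_mul {f : K → ℝ} (hf : MemAc K f) {c : ℝ} (hc : 0 < c) :
    MemAc K fun x => c * f x := by
  refine ⟨continuous_const.mul hf.1, fun x y t ht ht1 h => ?_, fun x => mul_pos hc (hf.2.2 x)⟩
  simp only [hf.2.1 x y t ht ht1 h]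
  ring

theorem memAc_const_add_mul_clm {a b : ℝ} {L : E →L[ℝ] ℝ} (hpos : ∀ x : K, 0 < a + b * L x) :
    MemAc K fun x => a + b * L x := by
  refine ⟨by fun_prop, fun x y t _ _ _ => ?_, hpos⟩
  simp only [map_add, map_smul, smul_eq_mul]
  ring

theorem exists_pos_memAc_one_add_mul (hK : IsCompact K) (L : E →L[ℝ] ℝ) (c : ℝ) :
    ∃ s > 0, ∀ t, |t| ≤ s → ∃ f : Ac K, ∀ x, f.1 x = 1 + t * (L x - c) := by
  obtain ⟨C, hC⟩ := hK.exists_bound_of_continuousOn (f := fun x => L x - c) (by fun_prop)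
  refine ⟨(|C| + 1)⁻¹, by positivity, fun t ht => ?_⟩
  have hpos : ∀ x : K, 0 < (1 - t * c) + t * L x := fun x => by
    have hx : |L x - c| ≤ |C| := (hC x x.2).trans (le_abs_self C)
    have : |t * (L x - c)| < 1 := by
      rw [abs_mul]
      calc |t| * |L x - c| ≤ (|C| + 1)⁻¹ * |C| := by gcongr
        _ < 1 := by rw [inv_mul_lt_iff₀ (by positivity)]; linarith
    linarith [neg_abs_le (t * (L x - c))]
  exact ⟨⟨_, memAc_const_add_mul_clm hpos⟩, fun x => by ring⟩

theorem le_gaugem_iff (hK : IsCompact K) (hne : K.Nonempty) {f g : K → ℝ} (hf : MemAc K f)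
    (hg : MemAc K g) {l : ℝ} : l ≤ gaugem f g ↔ ∀ x, l * g x ≤ f x := by
  have : CompactSpace K := isCompact_iff_compactSpace.mp hK
  have : Nonempty K := hne.to_subtype
  obtain ⟨x₀, -, hx₀⟩ := isCompact_univ.exists_isMinOn univ_nonempty
    (hf.1.div hg.1 fun x => (hg.2.2 x).ne').continuousOn
  have key : ∀ l, (∀ x, l * g x ≤ f x) ↔ l ≤ f x₀ / g x₀ := fun l =>
    ⟨fun h => (le_div_iff₀ (hg.2.2 x₀)).2 (h x₀),
      fun h x => (le_div_iff₀ (hg.2.2 x)).1 (h.trans (hx₀ (mem_univ x)))⟩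
  have hset : {l : ℝ | 0 < l ∧ ∀ x, l * g x ≤ f x} = Ioc 0 (f x₀ / g x₀) := by
    ext l
    exact and_congr_right fun _ => key l
  rw [gaugem, hset, csSup_Ioc (div_pos (hf.2.2 x₀) (hg.2.2 x₀)), key]

end Basic

section Geometry

variable {E : Type*} [AddCommGroup E] [Module ℝ E] [TopologicalSpace E]
  [IsTopologicalAddGroup E] [ContinuousSMul ℝ E] {K : Set E}

theorem IsCompact.convexJoin {s t : Set E} (hs : IsCompact s) (ht : IsCompact t) :
    IsCompact (_root_.convexJoin ℝ s t) := by
  have : _root_.convexJoin ℝ s t =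
      (fun p : ℝ × E × E => (1 - p.1) • p.2.1 + p.1 • p.2.2) '' (Icc 0 1 ×ˢ s ×ˢ t) := by
    ext z
    simp only [mem_convexJoin, segment_eq_image, mem_image, Prod.exists, mem_prod]
    aesop
  rw [this]
  exact (isCompact_Icc.prod (hs.prod ht)).image (by fun_prop)

variable [LocallyConvexSpace ℝ E] [T2Space E]

theorem exists_memAc_ge_of_mem_extremePoints (hK : IsCompact K) (hKc : Convex ℝ K) {ψ : K}
    (hψ : (ψ : E) ∈ K.extremePoints ℝ) (g₁ g₂ : Ac K) {ε : ℝ} (hε : 0 < ε) :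
    ∃ h : Ac K, g₁ ≤ h ∧ g₂ ≤ h ∧ h.1 ψ < max (g₁.1 ψ) (g₂.1 ψ) + ε := by
  have : CompactSpace K := isCompact_iff_compactSpace.mp hK
  set M := max (g₁.1 ψ) (g₂.1 ψ)
  let Γ : Ac K → Set (E × ℝ) := fun g => range fun x : K => ((x : E), g.1 x)
  have hΓ : ∀ g (x : K), ((x : E), g.1 x) ∈ Γ g := fun g x => mem_range_self x
  set J := convexJoin ℝ (Γ g₁) (Γ g₂)
  have hJ₁ : Γ g₁ ⊆ J := subset_convexJoin_left ⟨_, hΓ g₂ ψ⟩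
  have hJ₂ : Γ g₂ ⊆ J := subset_convexJoin_right ⟨_, hΓ g₁ ψ⟩
  have hPJ : ((ψ : E), M + ε) ∉ J :=
    not_mem_convexJoin_graphs_of_mem_extremePoints hψ g₁.1 g₂.1 (lt_add_of_pos_right M hε)
  have hJconv : Convex ℝ J :=
    (g₁.2.2.1.convex_graph hKc).convexJoin (g₂.2.2.1.convex_graph hKc)
  have hJcomp : IsCompact J :=
    (isCompact_range (continuous_subtype_val.prodMk g₁.2.1)).convexJoin
      (isCompact_range (continuous_subtype_val.prodMk g₂.2.1))
  -- Solving `Λ (x, r) = u` for `r` gives the majorant.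
  obtain ⟨Λ, u, hΛP, hΛJ⟩ := geometric_hahn_banach_point_closed hJconv hJcomp.isClosed hPJ
  let L : E →L[ℝ] ℝ := Λ.comp (.inl ℝ E ℝ)
  set c := Λ (0, 1)
  have hΛ : ∀ z r, Λ (z, r) = L z + r * c := fun z r => by
    rw [show ((z, r) : E × ℝ) = (z, 0) + r • (0, 1) by simp, map_add, map_smul, smul_eq_mul]
    rfl
  rw [hΛ] at hΛP
  have hbelow : ∀ g, Γ g ⊆ J → ∀ x : K, u < L x + g.1 x * c := fun g hg x => by
    simpa [hΛ] using hΛJ _ (hg (hΓ g x))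
  have hc : c < 0 := by
    have := hbelow g₁ hJ₁ ψ
    nlinarith [le_max_left (g₁.1 ψ) (g₂.1 ψ)]
  have hval : ∀ x, u / c + -c⁻¹ * L x = (u - L x) / c := fun x => by ring
  have hdom : ∀ g, Γ g ⊆ J → ∀ x, g.1 x < (u - L x) / c := fun g hg x =>
    (lt_div_iff_of_neg hc).2 (by linarith [hbelow g hg x])
  have hpos : ∀ x : K, 0 < u / c + -c⁻¹ * L x := fun x => by
    rw [hval]
    exact (g₁.2.2.2 x).trans (hdom g₁ hJ₁ x)
  refine ⟨⟨_, memAc_const_add_mul_clm hpos⟩, fun x => ?_, fun x => ?_, ?_⟩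
  · exact (hdom g₁ hJ₁ x).le.trans_eq (hval x).symm
  · exact (hdom g₂ hJ₂ x).le.trans_eq (hval x).symm
  · show u / c + -c⁻¹ * L ψ < M + ε
    rw [hval, div_lt_iff_of_neg hc]
    linarith

theorem exists_memAc_ge_finset_of_mem_extremePoints (hK : IsCompact K) (hKc : Convex ℝ K)
    {ψ : K} (hψ : (ψ : E) ∈ K.extremePoints ℝ) {ι : Type*} (G : ι → Ac K) (t : Finset ι)
    (hG : ∀ i ∈ t, (G i).1 ψ ≤ 1) {ε : ℝ} (hε : 0 < ε) :
    ∃ h : Ac K, (∀ i ∈ t, G i ≤ h) ∧ h.1 ψ < 1 + ε := by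
  induction t using Finset.cons_induction generalizing ε with
  | empty => exact ⟨1, by simp, show (1 : ℝ) < 1 + ε by linarith⟩
  | cons i t hi ih =>
    obtain ⟨h₀, hG₀, hh₀⟩ := ih (fun j hj => hG j (Finset.mem_cons_of_mem hj)) (half_pos hε)
    obtain ⟨h, h₀h, hGh, hh⟩ :=
      exists_memAc_ge_of_mem_extremePoints hK hKc hψ h₀ (G i) (half_pos hε)
    refine ⟨h, fun j hj => ?_, ?_⟩
    · rcases Finset.mem_cons.1 hj with rfl | hj
      exacts [hGh, (hG₀ j hj).trans h₀h]
    · have : max (h₀.1 ψ) ((G i).1 ψ) < 1 + ε / 2 :=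
        max_lt hh₀ (by linarith [hG i (Finset.mem_cons_self i t)])
      linarith

theorem IsAffineOn.le_of_forall_extremePoints_le (hK : IsCompact K) (hKc : Convex ℝ K)
    {f : K → ℝ} (hfa : IsAffineOn K f) (hf : Continuous f) {c : ℝ}
    (h : ∀ x : K, (x : E) ∈ K.extremePoints ℝ → c ≤ f x) (x : K) : c ≤ f x := by
  have : CompactSpace K := isCompact_iff_compactSpace.mp hK
  set F : Set E := Subtype.val '' {x : K | c ≤ f x}
  have hFclosed : IsClosed F :=
    ((isClosed_le continuous_const hf).isCompact.image continuous_subtype_val).isClosed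
  have hFconv : Convex ℝ F := by
    rintro _ ⟨x, hx, rfl⟩ _ ⟨y, hy, rfl⟩ a b ha hb hab
    refine ⟨⟨_, hKc x.2 y.2 ha hb hab⟩, ?_, rfl⟩
    show c ≤ f _
    rw [hfa.apply_combo x y ha hb hab]
    have hc : c = a * c + b * c := by rw [← add_mul, hab, one_mul]
    nlinarith [mul_le_mul_of_nonneg_left (show c ≤ f x from hx) ha,
      mul_le_mul_of_nonneg_left (show c ≤ f y from hy) hb]
  have hextF : K.extremePoints ℝ ⊆ F := fun z hz => ⟨⟨z, hz.1⟩, h _ hz, rfl⟩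
  have hKF : K ⊆ F :=
    calc K = closure (convexHull ℝ (K.extremePoints ℝ)) :=
          (closure_convexHull_extremePoints hK hKc).symm
      _ ⊆ F := hFclosed.closure_subset_iff.2 (convexHull_min hextF hFconv)
  obtain ⟨y, hy, hyx⟩ := hKF x.2
  exact Subtype.ext hyx ▸ hy

theorem eq_of_forall_memAc_le (hK : IsCompact K) {x y : K} (h : ∀ f : Ac K, f.1 x ≤ f.1 y) :
    x = y := by
  by_contra hxy
  obtain ⟨L, hL⟩ := geometric_hahn_banach_point_point (Subtype.coe_injective.ne (Ne.symm hxy))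
  obtain ⟨s, hs, hf⟩ := exists_pos_memAc_one_add_mul hK L 0
  obtain ⟨f, hf⟩ := hf s (abs_of_pos hs).le
  have := h f
  rw [hf, hf] at this
  nlinarith

theorem exists_memAc_majorant_gap_of_not_mem_extremePoints (hK : IsCompact K) {β : K}
    (hβ : (β : E) ∉ K.extremePoints ℝ) :
    ∃ f₁ f₂ : Ac K, f₁.1 β = 1 ∧ f₂.1 β = 1 ∧
      ∃ η > 0, ∀ h : Ac K, f₁ ≤ h → f₂ ≤ h → 1 + η ≤ h.1 β := by
  simp only [mem_extremePoints_iff_left, β.2, true_and, not_forall] at hβ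
  obtain ⟨x₁, hx₁, x₂, hx₂, ⟨a, b, ha, hb, hab, hβab⟩, hx₁β⟩ := hβ
  have hx₁₂ : x₁ ≠ x₂ := by
    rintro rfl
    rw [← add_smul, hab, one_smul] at hβab
    exact hx₁β hβab
  obtain ⟨L, hL⟩ := geometric_hahn_banach_point_point hx₁₂
  obtain ⟨s, hs, hf⟩ := exists_pos_memAc_one_add_mul hK L (L β)
  -- A majorant of both is at least `f₂ x₁ > 1` at `x₁` and `f₁ x₂ > 1` at `x₂`, hence at `β`.
  obtain ⟨f₁, hf₁⟩ := hf s (abs_of_pos hs).le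
  obtain ⟨f₂, hf₂⟩ := hf (-s) (by rw [abs_neg, abs_of_pos hs])
  have hLβ : L β = a * L x₁ + b * L x₂ := by simp [← hβab]
  refine ⟨f₁, f₂, by simp [hf₁], by simp [hf₂], s * (2 * a * b * (L x₂ - L x₁)),
    mul_pos hs (mul_pos (by positivity) (sub_pos.2 hL)), fun h h₁ h₂ => ?_⟩
  have hmem : a • x₁ + b • x₂ ∈ K := hβab ▸ β.2
  have hhβ : h.1 β = a * h.1 ⟨x₁, hx₁⟩ + b * h.1 ⟨x₂, hx₂⟩ :=
    (congrArg h.1 (Subtype.ext hβab.symm)).trans (h.2.2.1.apply_combo _ _ ha.le hb.le hab hmem)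
  have e₁ : 1 + -s * (L x₁ - L β) ≤ h.1 ⟨x₁, hx₁⟩ := hf₂ ⟨x₁, hx₁⟩ ▸ h₂ ⟨x₁, hx₁⟩
  have e₂ : 1 + s * (L x₂ - L β) ≤ h.1 ⟨x₂, hx₂⟩ := hf₁ ⟨x₂, hx₂⟩ ▸ h₁ ⟨x₂, hx₂⟩
  rw [hhβ]
  rw [hLβ] at e₁ e₂
  obtain rfl : a = 1 - b := by linarith
  nlinarith [mul_le_mul_of_nonneg_left e₁ ha.le, mul_le_mul_of_nonneg_left e₂ hb.le]

end Geometry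

section Transfer

variable {E E' : Type*} [AddCommGroup E] [Module ℝ E] [TopologicalSpace E]
  [AddCommGroup E'] [Module ℝ E'] [TopologicalSpace E'] {K : Set E} {K' : Set E'}

def PreservesGauge (Φ : Ac K → Ac K') : Prop :=
  ∀ f g : Ac K, gaugem (Φ f).1 (Φ g).1 = gaugem f.1 g.1

theorem PreservesGauge.symm {Φ : Ac K ≃ Ac K'} (hΦ : PreservesGauge Φ) :
    PreservesGauge Φ.symm := fun f g => by
  rw [← hΦ, Φ.apply_symm_apply, Φ.apply_symm_apply]

theorem PreservesGauge.mul_le_iff {Φ : Ac K → Ac K'} (hΦ : PreservesGauge Φ) (hK : IsCompact K)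
    (hKne : K.Nonempty) (hK' : IsCompact K') (hK'ne : K'.Nonempty) (l : ℝ) (f g : Ac K) :
    (∀ x', l * (Φ g).1 x' ≤ (Φ f).1 x') ↔ ∀ x, l * g.1 x ≤ f.1 x := by
  rw [← le_gaugem_iff hK' hK'ne (Φ f).2 (Φ g).2, hΦ, le_gaugem_iff hK hKne f.2 g.2]

theorem PreservesGauge.map_le_map_iff {Φ : Ac K → Ac K'} (hΦ : PreservesGauge Φ)
    (hK : IsCompact K) (hKne : K.Nonempty) (hK' : IsCompact K') (hK'ne : K'.Nonempty)
    {f g : Ac K} : Φ f ≤ Φ g ↔ f ≤ g := by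
  show (∀ x', (Φ f).1 x' ≤ (Φ g).1 x') ↔ ∀ x, f.1 x ≤ g.1 x
  simpa only [one_mul] using hΦ.mul_le_iff hK hKne hK' hK'ne 1 g f

variable [IsTopologicalAddGroup E] [ContinuousSMul ℝ E] [LocallyConvexSpace ℝ E] [T2Space E]
  [IsTopologicalAddGroup E'] [ContinuousSMul ℝ E'] [LocallyConvexSpace ℝ E'] [T2Space E']
  (hK : IsNonemptyCompactConvex K) (hK' : IsNonemptyCompactConvex K')
  {Φ : Ac K ≃ Ac K'} (hΦ : PreservesGauge Φ) (hΦ1 : Φ 1 = 1)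
include hK hK' hΦ

theorem mem_extremePoints_of_forall_eval_eq {β : K} {ψ' : K'}
    (hψ' : (ψ' : E') ∈ K'.extremePoints ℝ) (heval : ∀ f : Ac K, f.1 β = (Φ f).1 ψ') :
    (β : E) ∈ K.extremePoints ℝ := by
  by_contra hβ
  obtain ⟨f₁, f₂, hf₁, hf₂, η, hη, hgap⟩ :=
    exists_memAc_majorant_gap_of_not_mem_extremePoints hK.isCompact hβ
  obtain ⟨h', hh'₁, hh'₂, hh'⟩ :=
    exists_memAc_ge_of_mem_extremePoints hK'.isCompact hK'.convex hψ' (Φ f₁) (Φ f₂) hη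
  rw [← heval, ← heval, hf₁, hf₂, max_self] at hh'
  have hle : ∀ f, Φ f ≤ h' → f ≤ Φ.symm h' := fun f hf =>
    (hΦ.map_le_map_iff hK.isCompact hK.nonempty hK'.isCompact hK'.nonempty).1
      (by rwa [Φ.apply_symm_apply])
  have := hgap (Φ.symm h') (hle f₁ hh'₁) (hle f₂ hh'₂)
  rw [heval, Φ.apply_symm_apply] at this
  linarith

include hΦ1

theorem exists_extremePoint_lt_mul {ψ' : K'} (hψ' : (ψ' : E') ∈ K'.extremePoints ℝ)
    (t : Finset (Ac K)) {c : ℝ} (hc : 1 < c) :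
    ∃ x : K, (x : E) ∈ K.extremePoints ℝ ∧ ∀ f ∈ t, f.1 x < c * (Φ f).1 ψ' := by
  have hz : ∀ f : Ac K, 0 < (Φ f).1 ψ' := fun f => (Φ f).2.2.2 ψ'
  let G : Ac K → Ac K' := fun f =>
    ⟨fun x' => ((Φ f).1 ψ')⁻¹ * (Φ f).1 x', (Φ f).2.const_mul (inv_pos.2 (hz f))⟩
  obtain ⟨h', hGh', hh'⟩ := exists_memAc_ge_finset_of_mem_extremePoints hK'.isCompact
    hK'.convex hψ' G t (fun f _ => (inv_mul_cancel₀ (hz f).ne').le) (sub_pos.2 hc)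
  have hmul := hΦ.mul_le_iff hK.isCompact hK.nonempty hK'.isCompact hK'.nonempty
  -- `Φ⁻¹ h' ≥ c` would give `h' = Φ (Φ⁻¹ h') ≥ Φ c = c`, contradicting `h' ψ' < c`.
  obtain ⟨x, hx, hxc⟩ : ∃ x : K, (x : E) ∈ K.extremePoints ℝ ∧ (Φ.symm h').1 x < c := by
    by_contra! H
    have hch : ∀ x, c * (1 : Ac K).1 x ≤ (Φ.symm h').1 x := fun x =>
      (mul_one c).trans_le ((Φ.symm h').2.2.1.le_of_forall_extremePoints_le hK.isCompact
        hK.convex (Φ.symm h').2.1 H x)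
    have := (hmul c (Φ.symm h') 1).2 hch ψ'
    rw [hΦ1, Φ.apply_symm_apply] at this
    change c * 1 ≤ _ at this
    linarith
  refine ⟨x, hx, fun f hf => ?_⟩
  have hfx := (hmul _ (Φ.symm h') f).1 (by rw [Φ.apply_symm_apply]; exact hGh' f hf) x
  rw [inv_mul_le_iff₀ (hz f)] at hfx
  exact hfx.trans_lt (by rw [mul_comm c]; exact mul_lt_mul_of_pos_left hxc (hz f))

theorem exists_extremePoint_lt_mul_of_mem_closure {x' : K'}
    (hx' : x' ∈ closure (Subtype.val ⁻¹' K'.extremePoints ℝ)) (t : Finset (Ac K)) {c : ℝ}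
    (hc : 1 < c) : ∃ x : K, (x : E) ∈ K.extremePoints ℝ ∧ ∀ f ∈ t, f.1 x < c * (Φ f).1 x' := by
  obtain ⟨d, hd, hdc⟩ := exists_between hc
  have hcd : 1 < c / d := (one_lt_div (by linarith)).2 hdc
  obtain ⟨ψ', hψ'N, hψ'⟩ := mem_closure_iff.1 hx' (⋂ f ∈ t, {y' | (Φ f).1 y' < d * (Φ f).1 x'})
    (isOpen_biInter_finset fun f _ => isOpen_lt (Φ f).2.1 continuous_const)
    (mem_iInter₂.2 fun f _ => lt_mul_of_one_lt_left ((Φ f).2.2.2 x') hd)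
  obtain ⟨x, hx, hlt⟩ := exists_extremePoint_lt_mul hK hK' hΦ hΦ1 hψ' t hcd
  refine ⟨x, hx, fun f hf => (hlt f hf).trans ?_⟩
  calc c / d * (Φ f).1 ψ' < c / d * (d * (Φ f).1 x') :=
        mul_lt_mul_of_pos_left (mem_iInter₂.1 hψ'N f hf) (by positivity)
    _ = c * (Φ f).1 x' := by field_simp

theorem exists_mem_closure_extremePoints_le {x' : K'}
    (hx' : x' ∈ closure (Subtype.val ⁻¹' K'.extremePoints ℝ)) :
    ∃ x ∈ closure (Subtype.val ⁻¹' K.extremePoints ℝ), ∀ f : Ac K, f.1 x ≤ (Φ f).1 x' := by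
  have : CompactSpace K := isCompact_iff_compactSpace.mp hK.isCompact
  let T : Ac K × ℕ → Set K := fun p => {x | p.1.1 x ≤ (1 + 1 / (p.2 + 1)) * (Φ p.1).1 x'}
  have hT : ∀ u : Finset (Ac K × ℕ),
      (closure (Subtype.val ⁻¹' K.extremePoints ℝ) ∩ ⋂ p ∈ u, T p).Nonempty := fun u => by
    classical
    obtain ⟨x, hx, hlt⟩ := exists_extremePoint_lt_mul_of_mem_closure hK hK' hΦ hΦ1 hx'
      (u.image Prod.fst) (c := 1 + 1 / (u.sup Prod.snd + 1)) (by simp; positivity)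
    refine ⟨x, subset_closure hx, mem_iInter₂.2 fun p hp =>
      (hlt p.1 (Finset.mem_image_of_mem _ hp)).le.trans ?_⟩
    have := (Φ p.1).2.2.2 x'
    gcongr
    exact_mod_cast Finset.le_sup hp
  obtain ⟨x, hx, hxT⟩ := isClosed_closure.isCompact.inter_iInter_nonempty T
    (fun p => isClosed_le p.1.2.1 continuous_const) hT
  refine ⟨x, hx, fun f => ?_⟩
  have hlim : Filter.Tendsto (fun n : ℕ => (1 + 1 / ((n : ℝ) + 1)) * (Φ f).1 x') Filter.atTop
      (nhds ((Φ f).1 x')) := by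
    simpa using (tendsto_one_div_add_atTop_nhds_zero_nat.const_add 1).mul_const ((Φ f).1 x')
  exact ge_of_tendsto' hlim fun n => mem_iInter.1 hxT (f, n)

theorem exists_extremePoint_eval_eq (ψ' : K'.extremePoints ℝ) :
    ∃ β : K.extremePoints ℝ, ∀ f : Ac K,
      f.1 (inclusion extremePoints_subset β) = (Φ f).1 (inclusion extremePoints_subset ψ') := by
  set y' : K' := inclusion extremePoints_subset ψ'
  obtain ⟨β, hβ, hβle⟩ :=
    exists_mem_closure_extremePoints_le hK hK' hΦ hΦ1 (subset_closure ψ'.2 : y' ∈ _)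
  obtain ⟨ζ, -, hζle⟩ :=
    exists_mem_closure_extremePoints_le hK' hK hΦ.symm (Φ.symm_apply_eq.2 hΦ1.symm) hβ
  have hζ : ζ = y' := eq_of_forall_memAc_le hK'.isCompact fun g =>
    calc g.1 ζ ≤ (Φ.symm g).1 β := hζle g
      _ ≤ (Φ (Φ.symm g)).1 y' := hβle _
      _ = g.1 y' := by rw [Φ.apply_symm_apply]
  have heval : ∀ f, f.1 β = (Φ f).1 y' := fun f =>
    (hβle f).antisymm (by simpa [hζ] using hζle (Φ f))
  exact ⟨⟨β, mem_extremePoints_of_forall_eval_eq hK hK' hΦ ψ'.2 heval⟩, heval⟩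

end Transfer

theorem statement2
    {E E' : Type*}
    [AddCommGroup E] [Module ℝ E] [TopologicalSpace E] [IsTopologicalAddGroup E]
    [ContinuousSMul ℝ E] [T2Space E] [LocallyConvexSpace ℝ E]
    [AddCommGroup E'] [Module ℝ E'] [TopologicalSpace E'] [IsTopologicalAddGroup E']
    [ContinuousSMul ℝ E'] [T2Space E'] [LocallyConvexSpace ℝ E']
    (K : Set E) (K' : Set E')
    (hKne : K.Nonempty) (hKcp : IsCompact K) (hKcv : Convex ℝ K)
    (hK'ne : K'.Nonempty) (hK'cp : IsCompact K') (hK'cv : Convex ℝ K')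
    (Φ : {f : K → ℝ // MemAc K f} → {g : K' → ℝ // MemAc K' g})
    (hbij : Function.Bijective Φ)
    (hpre : ∀ f g : {f : K → ℝ // MemAc K f},
      gaugem (Φ f).1 (Φ g).1 = gaugem f.1 g.1)
    (hone : ∀ (h1 : MemAc K (fun _ => (1 : ℝ))) (h1' : MemAc K' (fun _ => (1 : ℝ))),
      Φ ⟨fun _ => 1, h1⟩ = ⟨fun _ => 1, h1'⟩) :
    ∃ α : (K.extremePoints ℝ) ≃ (K'.extremePoints ℝ),
      (∀ (f : {f : K → ℝ // MemAc K f}) (ψ' : K'.extremePoints ℝ),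
        (Φ f).1 ⟨(ψ' : E'), extremePoints_subset ψ'.2⟩
          = f.1 ⟨(α.symm ψ' : E), extremePoints_subset (α.symm ψ').2⟩) ∧
      (∀ (g : {g : K' → ℝ // MemAc K' g}) (f : {f : K → ℝ // MemAc K f})
          (ψ : K.extremePoints ℝ), Φ f = g →
        f.1 ⟨(ψ : E), extremePoints_subset ψ.2⟩
          = g.1 ⟨(α ψ : E'), extremePoints_subset (α ψ).2⟩) := by
  let Ψ := Equiv.ofBijective Φ hbij
  have hK : IsNonemptyCompactConvex K := ⟨hKne, hKcp, hKcv⟩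
  have hK' : IsNonemptyCompactConvex K' := ⟨hK'ne, hK'cp, hK'cv⟩
  have hΨ : PreservesGauge Ψ := hpre
  have hΨ1 : Ψ 1 = 1 := hone _ _
  choose β hβ using exists_extremePoint_eval_eq hK hK' hΨ hΨ1
  choose ζ hζ using exists_extremePoint_eval_eq hK' hK hΨ.symm (Ψ.symm_apply_eq.2 hΨ1.symm)
  have hζβ : ∀ ψ', ζ (β ψ') = ψ' := fun ψ' =>
    inclusion_injective extremePoints_subset <| eq_of_forall_memAc_le hK'cp fun g =>
      le_of_eq <| by rw [hζ, hβ, Ψ.apply_symm_apply]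
  have hβζ : ∀ ψ, β (ζ ψ) = ψ := fun ψ =>
    inclusion_injective extremePoints_subset <| eq_of_forall_memAc_le hKcp fun f =>
      le_of_eq <| by rw [hβ, hζ, Ψ.symm_apply_apply]
  refine ⟨⟨ζ, β, hβζ, hζβ⟩, fun f ψ' => (hβ ψ' f).symm, fun g f ψ hfg => ?_⟩
  have hf : Ψ.symm g = f := Ψ.symm_apply_eq.2 hfg.symm
  rw [← hf]
  exact (hζ ψ g).symm
end
end

section
/- Let K and K' be nonempty compact convex sets. Suppose there exists a bijection α : ∂_e K → ∂_e K' such that: for every f ∈ A_c(K) there exists F ∈ A_c(K') with F(ψ') = f(α^{-1}(ψ')) for all ψ' ∈ ∂_e K', and for every g ∈ A_c(K') there exists G ∈ A_c(K) with G(ψ) = g(α(ψ)) for all ψ ∈ ∂_e K. Then there exists a gauge-preserving bijection Φ : A_c(K) → A_c(K') with Φ(1_K) = 1_{K'} satisfying Φ(f)(ψ') = f(α^{-1}(ψ')) for every f ∈ A_c(K) and every ψ' ∈ ∂_e K'. -/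
open Set

noncomputable section

/-! By Krein–Milman, a compact convex set is the closed convex hull of its extreme points, so an
inequality or equality between continuous affine functions holds on `K` as soon as it holds on
`∂_e K`. Hence the extensions given by the hypotheses are unique and mutually inverse, and the
constraint `l * g ≤ f` defining the gauge only needs checking on extreme points, where `α`
matches the two sides. -/

section Affine

variable {E : Type*} [AddCommGroup E] [Module ℝ E] {K : Set E} {f g : K → ℝ}

theorem IsAffineOn.const_mul (hg : IsAffineOn K g) (c : ℝ) :
    IsAffineOn K (fun x => c * g x) := by
  intro x y t ht₀ ht₁ hmem
  simp only [hg x y t ht₀ ht₁ hmem]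
  ring

theorem IsAffineOn.convex_image_setOf_le (hK : Convex ℝ K) (hf : IsAffineOn K f)
    (hg : IsAffineOn K g) : Convex ℝ (Subtype.val '' {x : K | g x ≤ f x}) := by
  rintro _ ⟨x, hx, rfl⟩ _ ⟨y, hy, rfl⟩ a b ha hb hab
  obtain rfl : b = 1 - a := by linarith
  have hmem : a • (x : E) + (1 - a) • (y : E) ∈ K := hK x.2 y.2 ha hb hab
  refine ⟨⟨_, hmem⟩, ?_, rfl⟩
  change g x ≤ f x at hx
  change g y ≤ f y at hy
  show g _ ≤ f _
  rw [hf x y a ha (by linarith) hmem, hg x y a ha (by linarith) hmem]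
  nlinarith

end Affine

section KreinMilman

variable {E : Type*} [AddCommGroup E] [Module ℝ E] [TopologicalSpace E] [IsTopologicalAddGroup E]
  [ContinuousSMul ℝ E] [T2Space E] [LocallyConvexSpace ℝ E]
  {K : Set E} {f g : K → ℝ}

theorem subset_of_extremePoints_subset (hKcp : IsCompact K) (hKcv : Convex ℝ K) {S : Set E}
    (hS : IsClosed S) (hSconv : Convex ℝ S) (hKS : K.extremePoints ℝ ⊆ S) : K ⊆ S := by
  rw [← closure_convexHull_extremePoints hKcp hKcv]
  exact closure_minimal (convexHull_min hKS hSconv) hS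

theorem forall_le_of_forall_extremePoints_le (hKcp : IsCompact K) (hKcv : Convex ℝ K)
    (hf : Continuous f) (haf : IsAffineOn K f) (hg : Continuous g) (hag : IsAffineOn K g)
    (h : ∀ ψ : K.extremePoints ℝ,
      g (inclusion extremePoints_subset ψ) ≤ f (inclusion extremePoints_subset ψ)) :
    ∀ x : K, g x ≤ f x := by
  have : CompactSpace K := isCompact_iff_compactSpace.mp hKcp
  have hclosed : IsClosed (Subtype.val '' {x : K | g x ≤ f x}) :=
    ((isClosed_le hg hf).isCompact.image continuous_subtype_val).isClosed
  have hKS := subset_of_extremePoints_subset hKcp hKcv hclosed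
    (haf.convex_image_setOf_le hKcv hag) fun ψ hψ => ⟨_, h ⟨ψ, hψ⟩, rfl⟩
  intro x
  obtain ⟨y, hy, hyx⟩ := hKS x.2
  rwa [← Subtype.ext hyx]

theorem forall_le_iff_forall_extremePoints_le (hKcp : IsCompact K) (hKcv : Convex ℝ K)
    (hf : Continuous f) (haf : IsAffineOn K f) (hg : Continuous g) (hag : IsAffineOn K g) :
    (∀ x : K, g x ≤ f x) ↔ ∀ ψ : K.extremePoints ℝ,
      g (inclusion extremePoints_subset ψ) ≤ f (inclusion extremePoints_subset ψ) :=
  ⟨fun h _ => h _, forall_le_of_forall_extremePoints_le hKcp hKcv hf haf hg hag⟩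

theorem eq_of_forall_extremePoints_eq (hKcp : IsCompact K) (hKcv : Convex ℝ K)
    (hf : Continuous f) (haf : IsAffineOn K f) (hg : Continuous g) (hag : IsAffineOn K g)
    (h : ∀ ψ : K.extremePoints ℝ,
      f (inclusion extremePoints_subset ψ) = g (inclusion extremePoints_subset ψ)) :
    f = g :=
  funext fun x => le_antisymm
    (forall_le_of_forall_extremePoints_le hKcp hKcv hg hag hf haf (fun ψ => (h ψ).le) x)
    (forall_le_of_forall_extremePoints_le hKcp hKcv hf haf hg hag (fun ψ => (h ψ).ge) x)

end KreinMilman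

theorem gaugem_eq_of_extremePoints_equiv {E E' : Type*}
    [AddCommGroup E] [Module ℝ E] [TopologicalSpace E] [IsTopologicalAddGroup E]
    [ContinuousSMul ℝ E] [T2Space E] [LocallyConvexSpace ℝ E]
    [AddCommGroup E'] [Module ℝ E'] [TopologicalSpace E'] [IsTopologicalAddGroup E']
    [ContinuousSMul ℝ E'] [T2Space E'] [LocallyConvexSpace ℝ E']
    {K : Set E} {K' : Set E'} (hKcp : IsCompact K) (hKcv : Convex ℝ K)
    (hK'cp : IsCompact K') (hK'cv : Convex ℝ K')
    (α : K.extremePoints ℝ ≃ K'.extremePoints ℝ) {f g : K → ℝ} {F G : K' → ℝ}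
    (hf : Continuous f) (haf : IsAffineOn K f) (hg : Continuous g) (hag : IsAffineOn K g)
    (hF : Continuous F) (haF : IsAffineOn K' F) (hG : Continuous G) (haG : IsAffineOn K' G)
    (hFf : ∀ ψ, F (inclusion extremePoints_subset ψ) =
      f (inclusion extremePoints_subset (α.symm ψ)))
    (hGg : ∀ ψ, G (inclusion extremePoints_subset ψ) =
      g (inclusion extremePoints_subset (α.symm ψ))) :
    gaugem F G = gaugem f g := by
  unfold gaugem
  congr 1
  ext l
  refine and_congr_right fun _ => ?_
  rw [forall_le_iff_forall_extremePoints_le (g := fun x => l * G x) hK'cp hK'cv hF haF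
      (continuous_const.mul hG) (haG.const_mul l),
    forall_le_iff_forall_extremePoints_le (g := fun x => l * g x) hKcp hKcv hf haf
      (continuous_const.mul hg) (hag.const_mul l),
    ← α.symm.forall_congr_right]
  simp only [hFf, hGg]

theorem statement3_general
    {E E' : Type*}
    [AddCommGroup E] [Module ℝ E] [TopologicalSpace E] [IsTopologicalAddGroup E]
    [ContinuousSMul ℝ E] [T2Space E] [LocallyConvexSpace ℝ E]
    [AddCommGroup E'] [Module ℝ E'] [TopologicalSpace E'] [IsTopologicalAddGroup E']
    [ContinuousSMul ℝ E'] [T2Space E'] [LocallyConvexSpace ℝ E']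
    (K : Set E) (K' : Set E')
    (hKcp : IsCompact K) (hKcv : Convex ℝ K)
    (hK'cp : IsCompact K') (hK'cv : Convex ℝ K')
    (α : (K.extremePoints ℝ) ≃ (K'.extremePoints ℝ))
    (hext : ∀ f : {f : K → ℝ // MemAc K f}, ∃ F : {F : K' → ℝ // MemAc K' F},
      ∀ ψ' : K'.extremePoints ℝ,
        F.1 ⟨(ψ' : E'), extremePoints_subset ψ'.2⟩
          = f.1 ⟨(α.symm ψ' : E), extremePoints_subset (α.symm ψ').2⟩)
    (hext' : ∀ g : {g : K' → ℝ // MemAc K' g}, ∃ G : {G : K → ℝ // MemAc K G},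
      ∀ ψ : K.extremePoints ℝ,
        G.1 ⟨(ψ : E), extremePoints_subset ψ.2⟩
          = g.1 ⟨(α ψ : E'), extremePoints_subset (α ψ).2⟩) :
    ∃ Φ : {f : K → ℝ // MemAc K f} → {g : K' → ℝ // MemAc K' g},
      Function.Bijective Φ ∧
      (∀ f g : {f : K → ℝ // MemAc K f},
        gaugem (Φ f).1 (Φ g).1 = gaugem f.1 g.1) ∧
      (∀ (h1 : MemAc K (fun _ => (1 : ℝ))) (h1' : MemAc K' (fun _ => (1 : ℝ))),
        Φ ⟨fun _ => 1, h1⟩ = ⟨fun _ => 1, h1'⟩) ∧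
      (∀ (f : {f : K → ℝ // MemAc K f}) (ψ' : K'.extremePoints ℝ),
        (Φ f).1 ⟨(ψ' : E'), extremePoints_subset ψ'.2⟩
          = f.1 ⟨(α.symm ψ' : E), extremePoints_subset (α.symm ψ').2⟩) := by
  choose Φ hΦ using hext
  choose Ψ hΨ using hext'
  have hΨΦ : Function.LeftInverse Ψ Φ := fun f => Subtype.ext <|
    eq_of_forall_extremePoints_eq hKcp hKcv (Ψ (Φ f)).2.1 (Ψ (Φ f)).2.2.1 f.2.1 f.2.2.1
      fun ψ => by rw [hΨ, hΦ, Equiv.symm_apply_apply]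
  have hΦΨ : Function.RightInverse Ψ Φ := fun g => Subtype.ext <|
    eq_of_forall_extremePoints_eq hK'cp hK'cv (Φ (Ψ g)).2.1 (Φ (Ψ g)).2.2.1 g.2.1 g.2.2.1
      fun ψ' => by rw [hΦ, hΨ, Equiv.apply_symm_apply]
  refine ⟨Φ, ⟨hΨΦ.injective, hΦΨ.surjective⟩, fun f g => ?_, fun h1 h1' => ?_, hΦ⟩
  · exact gaugem_eq_of_extremePoints_equiv hKcp hKcv hK'cp hK'cv α f.2.1 f.2.2.1 g.2.1 g.2.2.1
      (Φ f).2.1 (Φ f).2.2.1 (Φ g).2.1 (Φ g).2.2.1 (hΦ f) (hΦ g)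
  · exact Subtype.ext <| eq_of_forall_extremePoints_eq hK'cp hK'cv
      (Φ ⟨_, h1⟩).2.1 (Φ ⟨_, h1⟩).2.2.1 h1'.1 h1'.2.1 (hΦ ⟨_, h1⟩)

theorem statement3
    {E E' : Type*}
    [AddCommGroup E] [Module ℝ E] [TopologicalSpace E] [IsTopologicalAddGroup E]
    [ContinuousSMul ℝ E] [T2Space E] [LocallyConvexSpace ℝ E]
    [AddCommGroup E'] [Module ℝ E'] [TopologicalSpace E'] [IsTopologicalAddGroup E']
    [ContinuousSMul ℝ E'] [T2Space E'] [LocallyConvexSpace ℝ E']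
    (K : Set E) (K' : Set E')
    (hKne : K.Nonempty) (hKcp : IsCompact K) (hKcv : Convex ℝ K)
    (hK'ne : K'.Nonempty) (hK'cp : IsCompact K') (hK'cv : Convex ℝ K')
    (α : (K.extremePoints ℝ) ≃ (K'.extremePoints ℝ))
    (hext : ∀ f : {f : K → ℝ // MemAc K f}, ∃ F : {F : K' → ℝ // MemAc K' F},
      ∀ ψ' : K'.extremePoints ℝ,
        F.1 ⟨(ψ' : E'), extremePoints_subset ψ'.2⟩
          = f.1 ⟨(α.symm ψ' : E), extremePoints_subset (α.symm ψ').2⟩)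
    (hext' : ∀ g : {g : K' → ℝ // MemAc K' g}, ∃ G : {G : K → ℝ // MemAc K G},
      ∀ ψ : K.extremePoints ℝ,
        G.1 ⟨(ψ : E), extremePoints_subset ψ.2⟩
          = g.1 ⟨(α ψ : E'), extremePoints_subset (α ψ).2⟩) :
    ∃ Φ : {f : K → ℝ // MemAc K f} → {g : K' → ℝ // MemAc K' g},
      Function.Bijective Φ ∧
      (∀ f g : {f : K → ℝ // MemAc K f},
        gaugem (Φ f).1 (Φ g).1 = gaugem f.1 g.1) ∧
      (∀ (h1 : MemAc K (fun _ => (1 : ℝ))) (h1' : MemAc K' (fun _ => (1 : ℝ))),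
        Φ ⟨fun _ => 1, h1⟩ = ⟨fun _ => 1, h1'⟩) ∧
      (∀ (f : {f : K → ℝ // MemAc K f}) (ψ' : K'.extremePoints ℝ),
        (Φ f).1 ⟨(ψ' : E'), extremePoints_subset ψ'.2⟩
          = f.1 ⟨(α.symm ψ' : E), extremePoints_subset (α.symm ψ').2⟩) :=
  statement3_general K K' hKcp hKcv hK'cp hK'cv α hext hext'
end
end

section
/- Let K be a nonempty compact convex set, g ∈ A_usc(K) and ψ ∈ ∂_e K. Then sup{λ ∈ [0,∞) : λ·p_ψ(x) ≤ g(x) for all x ∈ K} = g(ψ), i.e. the extended gauge m(g, p_ψ) equals g(ψ), where p_ψ(x) = inf{h(x) : h ∈ A_usc(K), h(ψ) = 1}. -/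
open Set

noncomputable section

/-- Membership in `A_usc(K)`: upper semicontinuous affine functions `K → [0,∞)`. -/
def MemAusc {E : Type*} [AddCommGroup E] [Module ℝ E] [TopologicalSpace E]
    (K : Set E) (f : K → ℝ) : Prop :=
  UpperSemicontinuous f ∧ IsAffineOn K f ∧ ∀ x : K, 0 ≤ f x

/-- `p_ψ(x) = inf {h(x) : h ∈ A_usc(K), h(ψ) = 1}`. -/
def pPsi {E : Type*} [AddCommGroup E] [Module ℝ E] [TopologicalSpace E]
    (K : Set E) (ψ : E) (hψ : ψ ∈ K) (x : K) : ℝ :=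
  sInf {r : ℝ | ∃ h : K → ℝ, MemAusc K h ∧ h ⟨ψ, hψ⟩ = 1 ∧ h x = r}

/-! The gauge is attained at `g(ψ)`: the normalised function `g / g(ψ)` is admissible in
the infimum defining `p_ψ`, so `g(ψ) p_ψ ≤ g`, while `p_ψ(ψ) = 1` forces every admissible
`λ` to satisfy `λ ≤ g(ψ)`. -/

section

variable {E : Type*} [AddCommGroup E] [Module ℝ E] [TopologicalSpace E] {K : Set E}

theorem MemAusc.const {c : ℝ} (hc : 0 ≤ c) : MemAusc K fun _ => c :=
  ⟨continuous_const.upperSemicontinuous, fun _ _ _ _ _ _ => by ring, fun _ => hc⟩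

theorem MemAusc.mul_const {f : K → ℝ} (hf : MemAusc K f) {c : ℝ} (hc : 0 ≤ c) :
    MemAusc K fun x => f x * c := by
  obtain ⟨hfu, hfa, hfn⟩ := hf
  refine ⟨(continuous_mul_const c).comp_upperSemicontinuous hfu
    fun _ _ hab => mul_le_mul_of_nonneg_right hab hc, fun x y t ht0 ht1 hxy => ?_,
    fun x => mul_nonneg (hfn x) hc⟩
  simp only [hfa x y t ht0 ht1 hxy]
  ring

theorem pPsi_le {ψ : E} (hψ : ψ ∈ K) {h : K → ℝ} (hh : MemAusc K h) (hψ1 : h ⟨ψ, hψ⟩ = 1)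
    (x : K) : pPsi K ψ hψ x ≤ h x :=
  csInf_le ⟨0, by rintro _ ⟨h', hh', -, rfl⟩; exact hh'.2.2 x⟩ ⟨h, hh, hψ1, rfl⟩

theorem pPsi_self {ψ : E} (hψ : ψ ∈ K) : pPsi K ψ hψ ⟨ψ, hψ⟩ = 1 := by
  refine le_antisymm (pPsi_le hψ (MemAusc.const zero_le_one) rfl _) (le_csInf ?_ ?_)
  · exact ⟨1, fun _ => 1, MemAusc.const zero_le_one, rfl, rfl⟩
  · rintro _ ⟨h, -, hψ1, rfl⟩
    exact hψ1.ge

theorem mul_pPsi_le {ψ : E} (hψ : ψ ∈ K) {g : K → ℝ} (hg : MemAusc K g) (x : K) :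
    g ⟨ψ, hψ⟩ * pPsi K ψ hψ x ≤ g x := by
  rcases (hg.2.2 ⟨ψ, hψ⟩).eq_or_lt with hgψ | hgψ
  · rw [← hgψ, zero_mul]
    exact hg.2.2 x
  have hnormalised : MemAusc K fun y => g y * (g ⟨ψ, hψ⟩)⁻¹ := hg.mul_const (inv_nonneg.2 hgψ.le)
  calc g ⟨ψ, hψ⟩ * pPsi K ψ hψ x
      ≤ g ⟨ψ, hψ⟩ * (g x * (g ⟨ψ, hψ⟩)⁻¹) :=
        mul_le_mul_of_nonneg_left (pPsi_le hψ hnormalised (mul_inv_cancel₀ hgψ.ne') x) hgψ.le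
    _ = g x := by field_simp

theorem isGreatest_gauge_pPsi {ψ : E} (hψ : ψ ∈ K) {g : K → ℝ} (hg : MemAusc K g) :
    IsGreatest {l : ℝ | 0 ≤ l ∧ ∀ x : K, l * pPsi K ψ hψ x ≤ g x} (g ⟨ψ, hψ⟩) := by
  refine ⟨⟨hg.2.2 _, mul_pPsi_le hψ hg⟩, fun l ⟨_, hl⟩ => ?_⟩
  simpa only [pPsi_self, mul_one] using hl ⟨ψ, hψ⟩

end

theorem statement11_general
    {E : Type*}
    [AddCommGroup E] [Module ℝ E] [TopologicalSpace E]
    (K : Set E)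
    (g : K → ℝ) (hg : MemAusc K g)
    (ψ : E) (hψ : ψ ∈ K.extremePoints ℝ) :
    sSup {l : ℝ | 0 ≤ l ∧
        ∀ x : K, l * pPsi K ψ (extremePoints_subset hψ) x ≤ g x}
      = g ⟨ψ, extremePoints_subset hψ⟩ :=
  (isGreatest_gauge_pPsi (extremePoints_subset hψ) hg).csSup_eq

theorem statement11
    {E : Type*}
    [AddCommGroup E] [Module ℝ E] [TopologicalSpace E] [IsTopologicalAddGroup E]
    [ContinuousSMul ℝ E] [T2Space E] [LocallyConvexSpace ℝ E]
    (K : Set E) (hKne : K.Nonempty) (hKcp : IsCompact K) (hKcv : Convex ℝ K)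
    (g : K → ℝ) (hg : MemAusc K g)
    (ψ : E) (hψ : ψ ∈ K.extremePoints ℝ) :
    sSup {l : ℝ | 0 ≤ l ∧
        ∀ x : K, l * pPsi K ψ (extremePoints_subset hψ) x ≤ g x}
      = g ⟨ψ, extremePoints_subset hψ⟩ :=
  statement11_general K g hg ψ hψ
end
end

section
/- Let K be a nonempty compact convex set. The following are equivalent: (i) A_lsc(K) is strongly co-atomic, i.e. every g ∈ A_lsc(K) is the greatest lower bound in A_lsc(K) of the set of co-extremal vectors of A_lsc(K) lying above g; (ii) every g ∈ A_lsc(K) is the greatest lower bound in A_lsc(K) of the set {M(g, I^∞_ψ)·I^∞_ψ : ψ ∈ ∂_e K}; (iii) for all g, g' ∈ A_lsc(K), one has M(g, I^∞_ψ) ≤ M(g', I^∞_ψ) for every ψ ∈ ∂_e K if and only if g ≤ g' pointwise. -/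
/-!
For `g > 0` the gauge `M(g, I^∞_ψ)` is `g ψ`, and `h ≤ c • I^∞_ψ` just says `h ψ ≤ c`; so (ii)
and (iii) both say that `h ≤ g` on `∂_e K` implies `h ≤ g`. So does (i), because `h` lies below
every co-extremal `q ≥ g` iff `h ≤ g` on `∂_e K`: each `c • I^∞_ψ` (`ψ` extreme, `c > 0`) is
co-extremal, and a co-extremal `q` is finite at one point at most, which is extreme.

Indeed, if `q x, q y < ∞` and `L` is a continuous functional with `L x ≠ L y`, then for each shift
`c` with `L + c ≥ 0` on the compact set `K`, `q + (L + c)` lies above `q`, hence is a multiple of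
`q`, forcing `(L x + c) q y = (L y + c) q x`; two shifts give `q x = q y` and then `L x = L y`.
If `q x < ∞` and `x` lies in an open segment `]u, v[`, affinity makes `q u, q v` finite, so
`u = v = x`.
-/

open Set
open scoped ENNReal Classical

noncomputable section

/-- `f : K → [0,∞]` is affine on `K` (with the convention `0 · ∞ = 0`). -/
def IsAffineOnE {E : Type*} [AddCommGroup E] [Module ℝ E] (K : Set E) (f : K → ℝ≥0∞) : Prop :=
  ∀ (x y : K) (t : ℝ), 0 ≤ t → t ≤ 1 →
    ∀ h : t • (x : E) + (1 - t) • (y : E) ∈ K,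
      f ⟨t • (x : E) + (1 - t) • (y : E), h⟩
        = ENNReal.ofReal t * f x + ENNReal.ofReal (1 - t) * f y

/-- Membership in `A_lsc(K)`: lower semicontinuous affine functions `K → (0,∞]`. -/
def MemAlsc {E : Type*} [AddCommGroup E] [Module ℝ E] [TopologicalSpace E]
    (K : Set E) (f : K → ℝ≥0∞) : Prop :=
  LowerSemicontinuous f ∧ IsAffineOnE K f ∧ ∀ x : K, 0 < f x

/-- The function `I^∞_ψ`, equal to `1` at `ψ` and `∞` elsewhere. -/
def Iinf {E : Type*} [AddCommGroup E] [Module ℝ E]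
    (K : Set E) (ψ : E) (hψ : ψ ∈ K) : K → ℝ≥0∞ :=
  fun x => if (x : E) = ψ then 1 else ∞

/-- `q` is a co-extremal vector of the cone `A_lsc(K)`. -/
def CoExtremalLsc {E : Type*} [AddCommGroup E] [Module ℝ E] [TopologicalSpace E]
    (K : Set E) (q : K → ℝ≥0∞) : Prop :=
  MemAlsc K q ∧
    {f : K → ℝ≥0∞ | MemAlsc K f ∧ q ≤ f}
      = {f : K → ℝ≥0∞ | ∃ t : ℝ≥0∞, 1 ≤ t ∧ f = fun x => t * q x}

/-- The extended gauge `M(f,g) = inf {μ ∈ (0,∞] : f ≤ μ·g}`. -/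
def MgaugeE {E : Type*} [AddCommGroup E] [Module ℝ E] {K : Set E}
    (f g : K → ℝ≥0∞) : ℝ≥0∞ :=
  sInf {m : ℝ≥0∞ | 0 < m ∧ ∀ x : K, f x ≤ m * g x}

section

variable {E : Type*} [AddCommGroup E] [Module ℝ E] {K : Set E}

lemma IsAffineOnE.add {f g : K → ℝ≥0∞} (hf : IsAffineOnE K f) (hg : IsAffineOnE K g) :
    IsAffineOnE K (f + g) := by
  intro x y t ht0 ht1 hxy
  simp only [Pi.add_apply, hf x y t ht0 ht1 hxy, hg x y t ht0 ht1 hxy]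
  ring

lemma isAffineOnE_ofReal (L : E →ₗ[ℝ] ℝ) (c : ℝ) (hLc : ∀ z : K, 0 ≤ L z + c) :
    IsAffineOnE K fun z => ENNReal.ofReal (L z + c) := by
  intro x y t ht0 ht1 hxy
  have ht1' : 0 ≤ 1 - t := sub_nonneg.2 ht1
  have hsplit : L (t • (x : E) + (1 - t) • (y : E)) + c
      = t * (L x + c) + (1 - t) * (L y + c) := by
    simp only [map_add, map_smul, smul_eq_mul]; ring
  dsimp only
  rw [hsplit, ENNReal.ofReal_add (mul_nonneg ht0 (hLc x)) (mul_nonneg ht1' (hLc y)),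
    ENNReal.ofReal_mul ht0, ENNReal.ofReal_mul ht1']

lemma mul_Iinf_apply {ψ : E} (hψ : ψ ∈ K) {d : ℝ≥0∞} (hd : d ≠ 0) (z : K) :
    d * Iinf K ψ hψ z = if (z : E) = ψ then d else ∞ := by
  unfold Iinf
  split_ifs <;> simp [hd]

lemma le_mul_Iinf_iff {ψ : E} (hψ : ψ ∈ K) {d : ℝ≥0∞} (hd : d ≠ 0) {h : K → ℝ≥0∞} :
    (h ≤ fun z => d * Iinf K ψ hψ z) ↔ h ⟨ψ, hψ⟩ ≤ d := by
  simp only [Pi.le_def, mul_Iinf_apply hψ hd]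
  refine ⟨fun hle => by simpa using hle ⟨ψ, hψ⟩, fun hle z => ?_⟩
  split_ifs with hz
  · obtain rfl : z = ⟨ψ, hψ⟩ := Subtype.ext hz
    exact hle
  · exact le_top

lemma MgaugeE_Iinf {ψ : E} (hψ : ψ ∈ K) {g : K → ℝ≥0∞} (hg : 0 < g ⟨ψ, hψ⟩) :
    MgaugeE g (Iinf K ψ hψ) = g ⟨ψ, hψ⟩ :=
  le_antisymm (sInf_le ⟨hg, (le_mul_Iinf_iff hψ hg.ne').2 le_rfl⟩)
    (le_sInf fun _ ⟨hm, hle⟩ => (le_mul_Iinf_iff hψ hm.ne').1 hle)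

lemma le_MgaugeE_mul_Iinf_iff {ψ : E} (hψ : ψ ∈ K) {g h : K → ℝ≥0∞} (hg : 0 < g ⟨ψ, hψ⟩) :
    (h ≤ fun z => MgaugeE g (Iinf K ψ hψ) * Iinf K ψ hψ z) ↔ h ⟨ψ, hψ⟩ ≤ g ⟨ψ, hψ⟩ := by
  rw [MgaugeE_Iinf hψ hg, le_mul_Iinf_iff hψ hg.ne']

lemma isAffineOnE_mul_Iinf {ψ : E} (hψ : ψ ∈ K.extremePoints ℝ) {d : ℝ≥0∞} (hd : d ≠ 0) :
    IsAffineOnE K fun z => d * Iinf K ψ (extremePoints_subset hψ) z := by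
  intro x y t ht0 ht1 hxy
  simp only [mul_Iinf_apply _ hd]
  rcases ht0.eq_or_lt with rfl | ht0
  · simp
  rcases ht1.eq_or_lt with rfl | ht1
  · simp
  have hcomb : t • (x : E) + (1 - t) • (y : E) = ψ ↔ (x : E) = ψ ∧ (y : E) = ψ :=
    ⟨fun h => (mem_extremePoints.1 hψ).2 x x.2 y y.2 ⟨t, 1 - t, ht0, sub_pos.2 ht1, by ring, h⟩,
      fun ⟨hx, hy⟩ => by rw [hx, hy, ← add_smul, add_sub_cancel, one_smul]⟩
  have ht0' : ENNReal.ofReal t ≠ 0 := (ENNReal.ofReal_pos.2 ht0).ne'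
  have ht1' : ENNReal.ofReal (1 - t) ≠ 0 := (ENNReal.ofReal_pos.2 (sub_pos.2 ht1)).ne'
  simp only [hcomb]
  by_cases hx : (x : E) = ψ <;> by_cases hy : (y : E) = ψ <;>
    simp only [hx, hy, and_self, and_false, false_and, if_true, if_false, ENNReal.mul_top ht0',
      ENNReal.mul_top ht1', add_top, top_add]
  rw [← add_mul, ← ENNReal.ofReal_add ht0.le (sub_pos.2 ht1).le, add_sub_cancel,
    ENNReal.ofReal_one, one_mul]

end

section

variable {E : Type*} [AddCommGroup E] [Module ℝ E] [TopologicalSpace E] {K : Set E}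

lemma MemAlsc.add {q φ : K → ℝ≥0∞} (hq : MemAlsc K q) (hφl : LowerSemicontinuous φ)
    (hφa : IsAffineOnE K φ) : MemAlsc K (q + φ) :=
  ⟨hq.1.add hφl, hq.2.1.add hφa, fun z => (hq.2.2 z).trans_le le_self_add⟩

lemma memAlsc_mul_Iinf [T1Space E] {ψ : E} (hψ : ψ ∈ K.extremePoints ℝ) {d : ℝ≥0∞}
    (hd : d ≠ 0) : MemAlsc K fun z => d * Iinf K ψ (extremePoints_subset hψ) z := by
  have hind : (fun z => d * Iinf K ψ (extremePoints_subset hψ) z)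
      = fun z => d + {z : K | (z : E) ≠ ψ}.indicator (fun _ => ∞) z := by
    funext z
    by_cases hz : (z : E) = ψ <;> simp [mul_Iinf_apply _ hd, hz]
  refine ⟨?_, isAffineOnE_mul_Iinf hψ hd, fun z => ?_⟩
  · rw [hind]
    exact lowerSemicontinuous_const.add
      ((isOpen_compl_singleton.preimage continuous_subtype_val).lowerSemicontinuous_indicator
        zero_le)
  · dsimp only
    rw [mul_Iinf_apply _ hd]
    split_ifs <;> simp [pos_iff_ne_zero, hd]

lemma coExtremalLsc_mul_Iinf [T1Space E] {ψ : E} (hψ : ψ ∈ K.extremePoints ℝ) {d : ℝ≥0∞}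
    (hd : d ≠ 0) : CoExtremalLsc K fun z => d * Iinf K ψ (extremePoints_subset hψ) z := by
  set hψK := extremePoints_subset hψ
  refine ⟨memAlsc_mul_Iinf hψ hd, Set.ext fun f => ⟨fun ⟨_, hle⟩ => ?_, ?_⟩⟩
  · have off : ∀ z : K, (z : E) ≠ ψ → f z = ∞ := fun z hz =>
      top_le_iff.1 (by simpa [mul_Iinf_apply _ hd, hz] using hle z)
    by_cases hdtop : d = ∞
    · have htop : ∀ z, d * Iinf K ψ hψK z = ∞ := fun z => by
        rw [mul_Iinf_apply _ hd]; split_ifs <;> simp [hdtop]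
      refine ⟨1, le_rfl, funext fun z => ?_⟩
      dsimp only
      rw [one_mul, htop, ← top_le_iff, ← htop]
      exact hle z
    have hψf : d ≤ f ⟨ψ, hψK⟩ := by
      simpa [mul_Iinf_apply _ hd] using hle ⟨ψ, hψK⟩
    have ht : 1 ≤ f ⟨ψ, hψK⟩ / d := (ENNReal.le_div_iff_mul_le (.inl hd) (.inl hdtop)).2 (by simpa)
    refine ⟨_, ht, funext fun z => ?_⟩
    dsimp only
    rw [mul_Iinf_apply _ hd]
    split_ifs with hz
    · obtain rfl : z = ⟨ψ, hψK⟩ := Subtype.ext hz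
      rw [ENNReal.div_mul_cancel hd hdtop]
    · rw [off z hz, ENNReal.mul_top (zero_lt_one.trans_le ht).ne']
  · rintro ⟨t, ht, rfl⟩
    have ht0 : t ≠ 0 := (zero_lt_one.trans_le ht).ne'
    refine ⟨?_, fun z => le_mul_of_one_le_left zero_le ht⟩
    simpa only [mul_assoc] using memAlsc_mul_Iinf hψ (mul_ne_zero ht0 hd)

end

namespace CoExtremalLsc

variable {E : Type*} [AddCommGroup E] [Module ℝ E] [TopologicalSpace E] {K : Set E}
  {q : K → ℝ≥0∞}

lemma mul_eq_mul (hq : CoExtremalLsc K q) {φ : K → ℝ≥0∞} (hφl : LowerSemicontinuous φ)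
    (hφa : IsAffineOnE K φ) {x y : K} (hx : q x ≠ ∞) (hy : q y ≠ ∞) :
    φ x * q y = φ y * q x := by
  obtain ⟨t, -, ht⟩ : q + φ ∈ {f | ∃ t : ℝ≥0∞, 1 ≤ t ∧ f = fun z => t * q z} :=
    hq.2 ▸ ⟨hq.1.add hφl hφa, le_self_add⟩
  have hφ : ∀ z, q z ≠ ∞ → φ z = (t - 1) * q z := fun z hz => by
    rw [ENNReal.sub_mul fun _ _ => hz, one_mul]
    exact ENNReal.eq_sub_of_add_eq hz ((add_comm _ _).trans (congrFun ht z))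
  rw [hφ x hx, hφ y hy]
  ring

lemma eq_of_ne_top [IsTopologicalAddGroup E] [ContinuousSMul ℝ E] [SeparatingDual ℝ E]
    (hK : IsCompact K) (hq : CoExtremalLsc K q) {x y : K} (hx : q x ≠ ∞) (hy : q y ≠ ∞) :
    x = y := by
  by_contra hxy
  obtain ⟨L, hL⟩ := SeparatingDual.exists_separating_of_ne (R := ℝ) (Subtype.coe_ne_coe.2 hxy)
  obtain ⟨m, hm⟩ := hK.bddBelow_image L.continuous.continuousOn
  have hreal : ∀ c : ℝ, (∀ z : K, 0 ≤ L z + c) →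
      (L x + c) * (q y).toReal = (L y + c) * (q x).toReal := fun c hc => by
    have hlsc : LowerSemicontinuous fun z : K => ENNReal.ofReal (L z + c) :=
      (ENNReal.continuous_ofReal.comp
        ((L.continuous.comp continuous_subtype_val).add continuous_const)).lowerSemicontinuous
    have h := hq.mul_eq_mul hlsc (isAffineOnE_ofReal L.toLinearMap c hc) hx hy
    simpa [ENNReal.toReal_ofReal (hc _)] using congrArg ENNReal.toReal h
  have hmz : ∀ z : K, m ≤ L z := fun z => hm ⟨z, z.2, rfl⟩
  have h₀ := hreal (-m) fun z => by linarith [hmz z]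
  have h₁ := hreal (-m + 1) fun z => by linarith [hmz z]
  have hqxy : (q y).toReal = (q x).toReal := by linarith
  have hqx : 0 < (q x).toReal := ENNReal.toReal_pos (hq.1.2.2 x).ne' hx
  rw [hqxy] at h₀
  exact hL (by simpa using mul_right_cancel₀ hqx.ne' h₀)

lemma mem_extremePoints [IsTopologicalAddGroup E] [ContinuousSMul ℝ E] [SeparatingDual ℝ E]
    (hK : IsCompact K) (hq : CoExtremalLsc K q) {x : K} (hx : q x ≠ ∞) :
    (x : E) ∈ K.extremePoints ℝ := by
  refine _root_.mem_extremePoints.2 ⟨x.2, fun u hu v hv ⟨s, r, hs, hr, hsr, hsum⟩ => ?_⟩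
  obtain rfl : r = 1 - s := by linarith
  have hmem : s • u + (1 - s) • v ∈ K := hsum ▸ x.2
  have haff := hq.1.2.1 ⟨u, hu⟩ ⟨v, hv⟩ s hs.le (by linarith) hmem
  rw [show (⟨_, hmem⟩ : K) = x from Subtype.ext hsum] at haff
  obtain ⟨hu', hv'⟩ := ENNReal.add_ne_top.1 (haff ▸ hx)
  have hfin : ∀ {a : ℝ} {w : K}, 0 < a → ENNReal.ofReal a * q w ≠ ∞ → q w ≠ ∞ :=
    fun ha hw h => hw (by rw [h, ENNReal.mul_top (ENNReal.ofReal_pos.2 ha).ne'])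
  exact ⟨congrArg Subtype.val (hq.eq_of_ne_top hK (hfin hs hu') hx),
    congrArg Subtype.val (hq.eq_of_ne_top hK (hfin hr hv') hx)⟩

end CoExtremalLsc

lemma forall_coExtremalLsc_le_iff {E : Type*} [AddCommGroup E] [Module ℝ E] [TopologicalSpace E]
    [IsTopologicalAddGroup E] [ContinuousSMul ℝ E] [SeparatingDual ℝ E] {K : Set E}
    (hK : IsCompact K) {g : K → ℝ≥0∞} (hg : ∀ z, 0 < g z) (h : K → ℝ≥0∞) :
    (∀ q, CoExtremalLsc K q → g ≤ q → h ≤ q) ↔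
      ∀ (ψ : E) (hψ : ψ ∈ K.extremePoints ℝ),
        h ⟨ψ, extremePoints_subset hψ⟩ ≤ g ⟨ψ, extremePoints_subset hψ⟩ := by
  have : T1Space E := SeparatingDual.t1Space (R := ℝ)
  refine ⟨fun hle ψ hψ => ?_, fun hle q hq hgq z => ?_⟩
  · have hgψ := (hg ⟨ψ, extremePoints_subset hψ⟩).ne'
    exact (le_mul_Iinf_iff _ hgψ).1
      (hle _ (coExtremalLsc_mul_Iinf hψ hgψ) ((le_mul_Iinf_iff _ hgψ).2 le_rfl))
  · by_cases hqz : q z = ∞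
    · exact hqz ▸ le_top
    · exact (hle z (hq.mem_extremePoints hK hqz)).trans (hgq z)

theorem statement14_general
    {E : Type*}
    [AddCommGroup E] [Module ℝ E] [TopologicalSpace E] [IsTopologicalAddGroup E]
    [ContinuousSMul ℝ E] [T2Space E] [LocallyConvexSpace ℝ E]
    (K : Set E) (hKcp : IsCompact K) :
    ((∀ g : K → ℝ≥0∞, MemAlsc K g →
        (∀ q : K → ℝ≥0∞, CoExtremalLsc K q → g ≤ q → g ≤ q) ∧
        (∀ h : K → ℝ≥0∞, MemAlsc K h →
          (∀ q : K → ℝ≥0∞, CoExtremalLsc K q → g ≤ q → h ≤ q) → h ≤ g))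
      ↔ (∀ g : K → ℝ≥0∞, MemAlsc K g →
        (∀ (ψ : E) (hψ : ψ ∈ K.extremePoints ℝ),
          g ≤ fun x => MgaugeE g (Iinf K ψ (extremePoints_subset hψ))
            * Iinf K ψ (extremePoints_subset hψ) x) ∧
        (∀ h : K → ℝ≥0∞, MemAlsc K h →
          (∀ (ψ : E) (hψ : ψ ∈ K.extremePoints ℝ),
            h ≤ fun x => MgaugeE g (Iinf K ψ (extremePoints_subset hψ))
              * Iinf K ψ (extremePoints_subset hψ) x) → h ≤ g))) ∧
    ((∀ g : K → ℝ≥0∞, MemAlsc K g →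
        (∀ (ψ : E) (hψ : ψ ∈ K.extremePoints ℝ),
          g ≤ fun x => MgaugeE g (Iinf K ψ (extremePoints_subset hψ))
            * Iinf K ψ (extremePoints_subset hψ) x) ∧
        (∀ h : K → ℝ≥0∞, MemAlsc K h →
          (∀ (ψ : E) (hψ : ψ ∈ K.extremePoints ℝ),
            h ≤ fun x => MgaugeE g (Iinf K ψ (extremePoints_subset hψ))
              * Iinf K ψ (extremePoints_subset hψ) x) → h ≤ g))
      ↔ (∀ g g' : K → ℝ≥0∞, MemAlsc K g → MemAlsc K g' →
        ((∀ (ψ : E) (hψ : ψ ∈ K.extremePoints ℝ),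
          MgaugeE g (Iinf K ψ (extremePoints_subset hψ))
            ≤ MgaugeE g' (Iinf K ψ (extremePoints_subset hψ))) ↔ g ≤ g'))) := by
  have below (g h : K → ℝ≥0∞) (hg : MemAlsc K g) :
      (∀ (ψ : E) (hψ : ψ ∈ K.extremePoints ℝ),
        h ≤ fun x => MgaugeE g (Iinf K ψ (extremePoints_subset hψ))
          * Iinf K ψ (extremePoints_subset hψ) x) ↔
      ∀ (ψ : E) (hψ : ψ ∈ K.extremePoints ℝ),
        h ⟨ψ, extremePoints_subset hψ⟩ ≤ g ⟨ψ, extremePoints_subset hψ⟩ :=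
    forall₂_congr fun _ _ => le_MgaugeE_mul_Iinf_iff _ (hg.2.2 _)
  have gauge_le (g g' : K → ℝ≥0∞) (hg : MemAlsc K g) (hg' : MemAlsc K g') :
      (∀ (ψ : E) (hψ : ψ ∈ K.extremePoints ℝ),
        MgaugeE g (Iinf K ψ (extremePoints_subset hψ))
          ≤ MgaugeE g' (Iinf K ψ (extremePoints_subset hψ))) ↔
      ∀ (ψ : E) (hψ : ψ ∈ K.extremePoints ℝ),
        g ⟨ψ, extremePoints_subset hψ⟩ ≤ g' ⟨ψ, extremePoints_subset hψ⟩ :=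
    forall₂_congr fun _ _ => by rw [MgaugeE_Iinf _ (hg.2.2 _), MgaugeE_Iinf _ (hg'.2.2 _)]
  have above (g : K → ℝ≥0∞) (hg : MemAlsc K g) := forall_coExtremalLsc_le_iff hKcp hg.2.2
  refine ⟨⟨fun hi g hg => ⟨(below g g hg).2 fun _ _ => le_rfl, fun h hh hle => ?_⟩,
      fun hii g hg => ⟨fun _ _ => id, fun h hh hle => ?_⟩⟩,
    ⟨fun hii g g' hg hg' => (gauge_le g g' hg hg').trans ⟨fun hle => ?_, fun hle _ _ => hle _⟩,
      fun hiii g hg => ⟨(below g g hg).2 fun _ _ => le_rfl, fun h hh hle => ?_⟩⟩⟩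
  · exact (hi g hg).2 h hh ((above g hg h).2 ((below g h hg).1 hle))
  · exact (hii g hg).2 h hh ((below g h hg).2 ((above g hg h).1 hle))
  · exact (hii g' hg').2 g hg ((below g' g hg').2 hle)
  · exact (hiii h g hh hg).1 ((gauge_le h g hh hg).2 ((below g h hg).1 hle))

theorem statement14
    {E : Type*}
    [AddCommGroup E] [Module ℝ E] [TopologicalSpace E] [IsTopologicalAddGroup E]
    [ContinuousSMul ℝ E] [T2Space E] [LocallyConvexSpace ℝ E]
    (K : Set E) (hKne : K.Nonempty) (hKcp : IsCompact K) (hKcv : Convex ℝ K) :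
    ((∀ g : K → ℝ≥0∞, MemAlsc K g →
        (∀ q : K → ℝ≥0∞, CoExtremalLsc K q → g ≤ q → g ≤ q) ∧
        (∀ h : K → ℝ≥0∞, MemAlsc K h →
          (∀ q : K → ℝ≥0∞, CoExtremalLsc K q → g ≤ q → h ≤ q) → h ≤ g))
      ↔ (∀ g : K → ℝ≥0∞, MemAlsc K g →
        (∀ (ψ : E) (hψ : ψ ∈ K.extremePoints ℝ),
          g ≤ fun x => MgaugeE g (Iinf K ψ (extremePoints_subset hψ))
            * Iinf K ψ (extremePoints_subset hψ) x) ∧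
        (∀ h : K → ℝ≥0∞, MemAlsc K h →
          (∀ (ψ : E) (hψ : ψ ∈ K.extremePoints ℝ),
            h ≤ fun x => MgaugeE g (Iinf K ψ (extremePoints_subset hψ))
              * Iinf K ψ (extremePoints_subset hψ) x) → h ≤ g))) ∧
    ((∀ g : K → ℝ≥0∞, MemAlsc K g →
        (∀ (ψ : E) (hψ : ψ ∈ K.extremePoints ℝ),
          g ≤ fun x => MgaugeE g (Iinf K ψ (extremePoints_subset hψ))
            * Iinf K ψ (extremePoints_subset hψ) x) ∧
        (∀ h : K → ℝ≥0∞, MemAlsc K h →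
          (∀ (ψ : E) (hψ : ψ ∈ K.extremePoints ℝ),
            h ≤ fun x => MgaugeE g (Iinf K ψ (extremePoints_subset hψ))
              * Iinf K ψ (extremePoints_subset hψ) x) → h ≤ g))
      ↔ (∀ g g' : K → ℝ≥0∞, MemAlsc K g → MemAlsc K g' →
        ((∀ (ψ : E) (hψ : ψ ∈ K.extremePoints ℝ),
          MgaugeE g (Iinf K ψ (extremePoints_subset hψ))
            ≤ MgaugeE g' (Iinf K ψ (extremePoints_subset hψ))) ↔ g ≤ g'))) :=
  statement14_general K hKcp
end
end
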